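/- arXiv:2506.23395 — 6 statements merged into one kernel-verified Lean document; each statement's English description precedes it below -/
import Mathlib

section
/- Let k ≥ 0 and let c, c₁, c₂, ..., c_k be claims such that c ∥ c_i for all 1 ≤ i ≤ k. Then for every state s such that c↓s and (c₁ c₂ ... c_k)↓s, it holds that (c c₁ c₂ ... c_k)↓s, (c₁ c₂ ... c_k c)↓s, and ⟦c c₁ c₂ ... c_k⟧s = ⟦c₁ c₂ ... c_k c⟧s. -/
/-- Semantics of a sequence of claims: process claims left to right,
undefined (`none`) as soon as one claim is undefined. -/
def run {State Claim : Type*} (sem : Claim → State → Option State) :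
    List Claim → State → Option State
  | [], s => some s
  | c :: γ, s => (sem c s).bind (run sem γ)

/-- A claim sequence is valid (defined) in a state. -/
def Defined {State Claim : Type*} (sem : Claim → State → Option State)
    (γ : List Claim) (s : State) : Prop :=
  run sem γ s ≠ none

/-- Weak equivalence of claim sequences: whenever both are valid in a state,
they yield the same result. -/
def WeakEquiv {State Claim : Type*} (sem : Claim → State → Option State)
    (γ γ' : List Claim) : Prop :=
  ∀ s : State, Defined sem γ s → Defined sem γ' s → run sem γ s = run sem γ' s

/-- Weak independence of claims: whenever both are valid in a state, both
processing orders are valid and yield the same result. -/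
def WeakIndep {State Claim : Type*} (sem : Claim → State → Option State)
    (c c' : Claim) : Prop :=
  ∀ s : State, sem c s ≠ none → sem c' s ≠ none →
    Defined sem [c, c'] s ∧ Defined sem [c', c] s ∧
      run sem [c, c'] s = run sem [c', c] s

theorem weakIndep_list_commute {State Claim : Type*} (sem : Claim → State → Option State)
    (c : Claim) (cs : List Claim) (h : ∀ ci ∈ cs, WeakIndep sem c ci) :
    ∀ s : State, sem c s ≠ none → Defined sem cs s →
      Defined sem (c :: cs) s ∧ Defined sem (cs ++ [c]) s ∧
        run sem (c :: cs) s = run sem (cs ++ [c]) s := by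
  induction cs with
  | nil =>
    intro s hc _
    refine ⟨?_, ?_, rfl⟩ <;> simpa [Defined, run] using hc
  | cons c₁ cs ih =>
    intro s hc hdef
    obtain ⟨s₁, hs₁⟩ : ∃ t, sem c₁ s = some t := by
      cases h1 : sem c₁ s with
      | none => exact absurd (by simp [Defined, run, h1] at hdef ⊢) hdef
      | some t => exact ⟨t, rfl⟩
    have hcs₁ : Defined sem cs s₁ := by
      simpa [Defined, run, hs₁] using hdef
    have hc₁ : sem c₁ s ≠ none := by simp [hs₁]
    obtain ⟨h1, h2, h3⟩ := h c₁ (by simp) s hc hc₁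
    have hcS₁ : sem c s₁ ≠ none := by
      intro hn
      exact h2 (by simp [run, hs₁, hn])
    obtain ⟨ih1, ih2, ih3⟩ := ih (fun ci hci => h ci (by simp [hci])) s₁ hcS₁ hcs₁
    have key : run sem (c :: c₁ :: cs) s = run sem (cs ++ [c]) s₁ := by
      have h3' : (sem c s).bind (sem c₁) = (sem c₁ s).bind (sem c) := by
        have := h3
        simpa [run, Option.bind_assoc] using this
      calc run sem (c :: c₁ :: cs) s
          = ((sem c s).bind (sem c₁)).bind (run sem cs) := by
            simp [run, Option.bind_assoc]
        _ = ((sem c₁ s).bind (sem c)).bind (run sem cs) := by rw [h3']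
        _ = run sem (c :: cs) s₁ := by simp [run, hs₁, Option.bind_assoc]
        _ = run sem (cs ++ [c]) s₁ := ih3
    refine ⟨?_, ?_, ?_⟩
    · simpa [Defined, key] using ih2
    · simpa [Defined, run, hs₁] using ih2
    · rw [key]; simp [run, hs₁]
end

section
/- Let k ≥ 0 and let c, c₁, c₂, ..., c_k be claims such that c ∥ c_i for all 1 ≤ i ≤ k. Then the claim sequences c c₁ c₂ ... c_k and c₁ c₂ ... c_k c are weakly equivalent: (c c₁ c₂ ... c_k) ⇓ (c₁ c₂ ... c_k c). -/
lemma run_append {State Claim : Type*} (sem : Claim → State → Option State)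
    (γ γ' : List Claim) (s : State) :
    run sem (γ ++ γ') s = (run sem γ s).bind (run sem γ') := by
  induction γ generalizing s with
  | nil => simp [run]
  | cons d γ ih =>
    simp only [List.cons_append, run]
    cases sem d s with
    | none => simp
    | some t => simp [ih]

theorem weakIndep_list_weakEquiv {State Claim : Type*} (sem : Claim → State → Option State)
    (c : Claim) (cs : List Claim) (h : ∀ ci ∈ cs, WeakIndep sem c ci) :
    WeakEquiv sem (c :: cs) (cs ++ [c]) := by
    induction cs generalizing c with
  | nil => intro s _ _; rfl
  | cons d cs ih =>
    intro s h1 h2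
    have hcs : sem c s ≠ none := by
      intro hn
      exact h1 (by simp [run, hn])
    have hds : sem d s ≠ none := by
      intro hn
      exact h2 (by simp [run, hn])
    obtain ⟨_, _, hcd⟩ := h d (by simp) s hcs hds
    obtain ⟨t, ht⟩ := Option.ne_none_iff_exists'.mp hds
    have key : run sem (c :: d :: cs) s = run sem (c :: cs) t := by
      have e1 : run sem (c :: d :: cs) s
          = (run sem [c, d] s).bind (run sem cs) := by
        have := run_append sem [c, d] cs s
        simpa using this
      rw [e1, hcd]
      simp [run, ht]
    have key2 : run sem (d :: cs ++ [c]) s = run sem (cs ++ [c]) t := by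
      simp [run, ht]
    rw [key, key2]
    exact ih c (fun ci hci => h ci (by simp [hci])) t
      (by show run sem (c :: cs) t ≠ none; rw [← key]; exact h1)
      (by show run sem (cs ++ [c]) t ≠ none; rw [← key2]; exact h2)
end

section
/- In the payment model, any two payment claims with distinct senders are weakly independent: for all addresses a₁ ≠ a₂, all addresses b₁, b₂, and all amounts v₁, v₂ > 0, the claims pay(a₁,b₁,v₁) and pay(a₂,b₂,v₂) are weakly independent (this covers all cases, including b₁ = b₂, b₁ = a₂, b₂ = a₁, and self-payments). -/
/-- A payment claim: `sender` pays `amount` to `recipient`. -/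
structure Pay (Address : Type*) where
  sender : Address
  recipient : Address
  amount : ℕ

/-- Semantics of a payment claim: valid iff the amount is positive and the
sender has a sufficient balance; the effect first subtracts the amount from
the sender's balance and then adds it to the recipient's balance. -/
def paySem {Address : Type*} [DecidableEq Address] (c : Pay Address)
    (s : Address → ℕ) : Option (Address → ℕ) :=
  if 0 < c.amount ∧ c.amount ≤ s c.sender then
    let s' := Function.update s c.sender (s c.sender - c.amount)
    some (Function.update s' c.recipient (s' c.recipient + c.amount))
  else none

set_option maxHeartbeats 1000000 in
theorem payments_distinct_senders_weakIndep {Address : Type*} [DecidableEq Address]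
    (a₁ a₂ b₁ b₂ : Address) (hne : a₁ ≠ a₂) (v₁ v₂ : ℕ) (h₁ : 0 < v₁) (h₂ : 0 < v₂) :
    WeakIndep paySem (Pay.mk a₁ b₁ v₁) (Pay.mk a₂ b₂ v₂) := by
  intro s hc1 hc2
  have hb1 : v₁ ≤ s a₁ := by
    by_contra h
    exact hc1 (by simp [paySem]; omega)
  have hb2 : v₂ ≤ s a₂ := by
    by_contra h
    exact hc2 (by simp [paySem]; omega)
  set s1 := Function.update (Function.update s a₁ (s a₁ - v₁)) b₁
      (Function.update s a₁ (s a₁ - v₁) b₁ + v₁) with hs1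
  set s2 := Function.update (Function.update s a₂ (s a₂ - v₂)) b₂
      (Function.update s a₂ (s a₂ - v₂) b₂ + v₂) with hs2
  have e1 : paySem (Pay.mk a₁ b₁ v₁) s = some s1 := by
    rw [paySem, if_pos ⟨h₁, hb1⟩]
  have e2 : paySem (Pay.mk a₂ b₂ v₂) s = some s2 := by
    rw [paySem, if_pos ⟨h₂, hb2⟩]
  have step : ∀ (a b a' : Address) (v : ℕ), a ≠ a' →
      s a' ≤ (Function.update (Function.update s a (s a - v)) b
        (Function.update s a (s a - v) b + v)) a' := by
    intro a b a' v hne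
    simp only [Function.update]
    split_ifs with h1 h2 <;> simp_all <;> omega
  have g1 : v₂ ≤ s1 a₂ := le_trans hb2 (step a₁ b₁ a₂ v₁ hne)
  have g2 : v₁ ≤ s2 a₁ := le_trans hb1 (step a₂ b₂ a₁ v₂ hne.symm)
  set s12 := Function.update (Function.update s1 a₂ (s1 a₂ - v₂)) b₂
      (Function.update s1 a₂ (s1 a₂ - v₂) b₂ + v₂) with hs12
  set s21 := Function.update (Function.update s2 a₁ (s2 a₁ - v₁)) b₁
      (Function.update s2 a₁ (s2 a₁ - v₁) b₁ + v₁) with hs21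
  have e12 : paySem (Pay.mk a₂ b₂ v₂) s1 = some s12 := by
    rw [paySem, if_pos ⟨h₂, g1⟩]
  have e21 : paySem (Pay.mk a₁ b₁ v₁) s2 = some s21 := by
    rw [paySem, if_pos ⟨h₁, g2⟩]
  have r1 : run paySem [Pay.mk a₁ b₁ v₁, Pay.mk a₂ b₂ v₂] s = some s12 := by
    simp [run, e1, e12]
  have r2 : run paySem [Pay.mk a₂ b₂ v₂, Pay.mk a₁ b₁ v₁] s = some s21 := by
    simp [run, e2, e21]
  refine ⟨by simp [Defined, r1], by simp [Defined, r2], ?_⟩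
  rw [r1, r2]
  simp only [hs12, hs21, hs1, hs2, Option.some.injEq]
  funext x
  simp only [Function.update_apply]
  split_ifs <;> subst_vars <;> first | rfl | omega | (exfalso; first | exact hne rfl | contradiction)
end

section
/- Weak equivalence is not transitive: there exist types State and Claim, a claim semantics ⟦·⟧ : Claim → State → Option State, and claim sequences γ, γ', γ'' such that γ ⇓ γ' and γ' ⇓ γ'', but not γ ⇓ γ'' (i.e., there is a state s with γ↓s, γ''↓s, and ⟦γ⟧s ≠ ⟦γ''⟧s). -/
theorem weakEquiv_not_transitive :
    ∃ (State Claim : Type) (sem : Claim → State → Option State)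
      (γ γ' γ'' : List Claim),
      WeakEquiv sem γ γ' ∧ WeakEquiv sem γ' γ'' ∧
        ∃ s : State, Defined sem γ s ∧ Defined sem γ'' s ∧
          run sem γ s ≠ run sem γ'' s := by
  refine ⟨Bool, Option Bool, fun c _ => c, [some true], [none], [some false],
    ?_, ?_, true, ?_, ?_, ?_⟩ <;>
    simp [WeakEquiv, Defined, run]
end

section
/- In the payment model extended with monotonic balance claims, a lower-bound balance claim is weakly independent of any payment from a different sender: for every address a, every bound n, every address b ≠ a, every address c, and every amount v > 0, the claims atLeast(a,n) and pay(b,c,v) are weakly independent. -/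
/-- Claims of the payment model extended with monotonic balance claims. -/
inductive PClaim (Address : Type*) where
  | pay (sender recipient : Address) (amount : ℕ)
  | atLeast (account : Address) (bound : ℕ)

/-- Semantics: a payment is valid iff the amount is positive and the sender
has a sufficient balance (subtract from sender, then add to recipient);
a monotonic balance claim `atLeast a n` is valid iff the balance of `a` is at
least `n`, and leaves the state unchanged. -/
def pSem {Address : Type*} [DecidableEq Address] :
    PClaim Address → (Address → ℕ) → Option (Address → ℕ)
  | .pay a b v, s =>
    if 0 < v ∧ v ≤ s a then
      let s' := Function.update s a (s a - v)
      some (Function.update s' b (s' b + v))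
    else none
  | .atLeast a n, s => if n ≤ s a then some s else none

theorem atLeast_weakIndep_pay {Address : Type*} [DecidableEq Address]
    (a : Address) (n : ℕ) (b : Address) (hba : b ≠ a) (c : Address) (v : ℕ) (hv : 0 < v) :
    WeakIndep pSem (PClaim.atLeast a n) (PClaim.pay b c v) := by
  intro s h1 h2
  have hn : n ≤ s a := by by_contra h; exact h1 (by simp [pSem, h])
  have hvb : v ≤ s b := by by_contra h; exact h2 (by simp [pSem, hv, h])
  have key : n ≤ Function.update (Function.update s b (s b - v)) c
      (Function.update s b (s b - v) c + v) a := by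
    rcases eq_or_ne c a with rfl | hca
    · simp [Function.update_apply, hba, Ne.symm hba]; omega
    · simp [Function.update_apply, hba, Ne.symm hba, hca, Ne.symm hca]; omega
  refine ⟨?_, ?_, ?_⟩ <;>
    simp [Defined, run, pSem, hn, hvb, hv, key]
end

section
/- Weakly independent payments need not be independent in the classical (Mazurkiewicz) sense: in the payment model with three distinct addresses A, B, C, the claims pay(A,B,1) and pay(B,C,1) are weakly independent (they have distinct senders), yet in the state s with s(A) = 1, s(B) = 0, s(C) = 0, the sequence [pay(A,B,1), pay(B,C,1)] is valid in s while the sequence [pay(B,C,1), pay(A,B,1)] is not. -/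
theorem weakIndep_not_classical_indep {Address : Type*} [DecidableEq Address]
    (A B C : Address) (hAB : A ≠ B) (hAC : A ≠ C) (hBC : B ≠ C)
    (s : Address → ℕ) (hA : s A = 1) (hB : s B = 0) (hC : s C = 0) :
    WeakIndep paySem (Pay.mk A B 1) (Pay.mk B C 1) ∧
    Defined paySem [Pay.mk A B 1, Pay.mk B C 1] s ∧
    ¬ Defined paySem [Pay.mk B C 1, Pay.mk A B 1] s := by
  refine ⟨?_, ?_, ?_⟩
  · intro t h1 h2
    have hA' : 1 ≤ t A := by
      by_contra h
      exact h1 (by simp [paySem]; omega)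
    have hB' : 1 ≤ t B := by
      by_contra h
      exact h2 (by simp [paySem]; omega)
    refine ⟨?_, ?_, ?_⟩
    · simp only [Defined, run, paySem]
      simp only [Function.update]
      simp only [zero_lt_one, true_and, if_pos hA']
      simp [Option.bind]
    · simp only [Defined, run, paySem]
      simp only [Function.update]
      simp only [zero_lt_one, true_and, if_pos hB']
      simp [Option.bind]
      simp [Function.update_apply, hAB, hAC, hBC, hAB.symm, hAC.symm, hBC.symm, hA']
    · simp only [run, paySem, Function.update]
      simp only [zero_lt_one, true_and, if_pos hA', if_pos hB']
      simp [Option.bind]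
      simp only [Function.update_apply, if_neg hAB.symm, if_neg (Ne.symm hAC), if_neg hBC,
        if_neg (Ne.symm hBC), if_pos rfl]
      simp only [if_neg hAC, if_neg hAB, if_true]
      rw [if_pos hA']
      congr 1
      funext x
      by_cases hx1 : x = A <;> by_cases hx2 : x = B <;> by_cases hx3 : x = C <;>
        subst_vars <;> simp_all [Function.update_apply]
  · simp [Defined, run, paySem, Function.update, hA, hB, hAB.symm, hBC, Option.bind]
  · simp [Defined, run, paySem, hB, Option.bind]
end
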